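/- arXiv:2601.09443 — 4 statements merged into one kernel-verified Lean document; each statement's English description precedes it below -/
import Mathlib

section
/- Over a von Neumann regular ring, a full subcategory of finitely presented modules is a wide subcategory (closed under kernels, cokernels, and extensions) if and only if it is a Serre subcategory (closed under subobjects, quotients, and extensions among finitely presented modules). -/
universe u

variable (R : Type u) [CommRing R]

/-- A class of modules is wide if it is closed under kernels, cokernels and
extensions. -/
def IsWideClass (P : (M : Type u) → [AddCommGroup M] → [Module R M] → Prop) : Prop :=
  (∀ (M N : Type u) [AddCommGroup M] [Module R M] [AddCommGroup N] [Module R N]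
      (f : M →ₗ[R] N), P M → P N → P ↥(LinearMap.ker f)) ∧
  (∀ (M N : Type u) [AddCommGroup M] [Module R M] [AddCommGroup N] [Module R N]
      (f : M →ₗ[R] N), P M → P N → P (N ⧸ LinearMap.range f)) ∧
  (∀ (A B C : Type u) [AddCommGroup A] [Module R A] [AddCommGroup B] [Module R B]
      [AddCommGroup C] [Module R C] (i : A →ₗ[R] B) (p : B →ₗ[R] C),
      Function.Injective i → Function.Surjective p → Function.Exact i p →
      P A → P C → P B)

/-- A class of finitely presented modules is Serre if it is closed under
finitely presented submodules, finitely presented quotients and extensions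
(within the category of finitely presented modules). -/
def IsSerreClass (P : (M : Type u) → [AddCommGroup M] → [Module R M] → Prop) : Prop :=
  (∀ (M : Type u) [AddCommGroup M] [Module R M], P M → ∀ K : Submodule R M,
      Module.FinitePresentation R ↥K → P ↥K) ∧
  (∀ (M : Type u) [AddCommGroup M] [Module R M], P M → ∀ K : Submodule R M,
      Module.FinitePresentation R (M ⧸ K) → P (M ⧸ K)) ∧
  (∀ (A B C : Type u) [AddCommGroup A] [Module R A] [AddCommGroup B] [Module R B]
      [AddCommGroup C] [Module R C] (i : A →ₗ[R] B) (p : B →ₗ[R] C),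
      Function.Injective i → Function.Surjective p → Function.Exact i p →
      P A → P C → P B)

private lemma eps_fin {R : Type u} [CommRing R] (hvnr : ∀ x : R, ∃ y : R, x = x * y * x) :
    ∀ (n : ℕ) (x : Fin n → R), ∃ ε ∈ Ideal.span (Set.range x), ∀ i, ε * x i = x i := by
  intro n
  induction n with
  | zero => exact fun x => ⟨0, Ideal.zero_mem _, fun i => i.elim0⟩
  | succ n ih =>
    intro x
    obtain ⟨ε', hmem, hfix⟩ := ih (x ∘ Fin.castSucc)
    set a := x (Fin.last n) with ha
    obtain ⟨z, hz⟩ := hvnr (a - ε' * a)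
    have hmem' : ε' ∈ Ideal.span (Set.range x) :=
      Ideal.span_mono (Set.range_comp_subset_range _ _) hmem
    have hamem : a ∈ Ideal.span (Set.range x) :=
      Ideal.subset_span ⟨Fin.last n, rfl⟩
    refine ⟨ε' + (a - ε' * a) * z * (1 - ε'), ?_, ?_⟩
    · exact Ideal.add_mem _ hmem'
        (Ideal.mul_mem_right _ _ (Ideal.mul_mem_right _ _
          (Ideal.sub_mem _ hamem (Ideal.mul_mem_left _ _ hamem))))
    · intro i
      refine Fin.lastCases ?_ ?_ i
      · linear_combination -hz
      · intro j
        have h := hfix j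
        simp only [Function.comp_apply] at h
        linear_combination (1 - (a - ε' * a) * z) * h

private lemma cyclic_idem {R : Type u} [CommRing R] {ι : Type u} [Fintype ι]
    (hvnr : ∀ x : R, ∃ y : R, x = x * y * x) (x : ι → R) :
    ∃ g : (ι → R) →ₗ[R] (ι → R), g ∘ₗ g = g ∧
      LinearMap.range g = Submodule.span R {x} := by
  classical
  obtain ⟨ε, hmem, hfix⟩ := eps_fin hvnr (Fintype.card ι) (x ∘ (Fintype.equivFin ι).symm)
  have hrange : Set.range (x ∘ (Fintype.equivFin ι).symm) = Set.range x :=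
    (Fintype.equivFin ι).symm.surjective.range_comp x
  rw [hrange] at hmem
  have hfix' : ∀ j, ε * x j = x j := by
    intro j
    have := hfix (Fintype.equivFin ι j)
    simpa using this
  obtain ⟨c, hc⟩ := Ideal.mem_span_range_iff_exists_fun.mp hmem
  let lam : (ι → R) →ₗ[R] R := ∑ i, c i • LinearMap.proj i
  have hlam : ∀ z : ι → R, lam z = ∑ i, c i * z i := by
    intro z
    simp [lam, LinearMap.proj]
  have hlamx : lam x = ε := by rw [hlam]; exact hc
  have hex : ε • x = x := funext fun j => hfix' j
  refine ⟨lam.smulRight x, ?_, ?_⟩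
  · ext z
    simp only [LinearMap.comp_apply, LinearMap.smulRight_apply, map_smul, hlamx,
      smul_eq_mul, mul_comm, mul_smul]
    rw [hex]
  · apply le_antisymm
    · rintro _ ⟨z, rfl⟩
      exact Submodule.smul_mem _ _ (Submodule.mem_span_singleton_self x)
    · rw [Submodule.span_le, Set.singleton_subset_iff]
      exact ⟨x, by simp [LinearMap.smulRight_apply, hlamx, hex]⟩

private lemma span_idem {R : Type u} [CommRing R] {ι : Type u} [Fintype ι]
    (hvnr : ∀ x : R, ∃ y : R, x = x * y * x) :
    ∀ (k : ℕ) (v : Fin k → (ι → R)), ∃ e : (ι → R) →ₗ[R] (ι → R),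
      e ∘ₗ e = e ∧ LinearMap.range e = Submodule.span R (Set.range v) := by
  intro k
  induction k with
  | zero =>
    intro v
    refine ⟨0, by ext z; simp, ?_⟩
    rw [Set.range_eq_empty v, Submodule.span_empty, LinearMap.range_zero]
  | succ k ih =>
    intro v
    obtain ⟨e1, he1c, hre1⟩ := ih (v ∘ Fin.castSucc)
    have he1 : ∀ w, e1 (e1 w) = e1 w := fun w => LinearMap.congr_fun he1c w
    set x := v (Fin.last k) with hx
    set y := x - e1 x with hy
    obtain ⟨g, hgc, hrg⟩ := cyclic_idem hvnr y
    have hg : ∀ w, g (g w) = g w := fun w => LinearMap.congr_fun hgc w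
    have hy0 : e1 y = 0 := by rw [hy, map_sub, he1, sub_self]
    have hge1 : ∀ z, e1 (g z) = 0 := by
      intro z
      have : g z ∈ Submodule.span R {y} := hrg ▸ LinearMap.mem_range_self g z
      obtain ⟨r, hr⟩ := Submodule.mem_span_singleton.mp this
      rw [← hr, map_smul, hy0, smul_zero]
    have hgy : g y = y := by
      have : y ∈ LinearMap.range g := hrg ▸ Submodule.mem_span_singleton_self y
      obtain ⟨w, hw⟩ := this
      rw [← hw, hg]
    set f := g ∘ₗ (LinearMap.id - e1) with hf
    have hfz : ∀ w, f w = g (w - e1 w) := fun w => rfl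
    have he1f : ∀ w, e1 (f w) = 0 := fun w => hge1 _
    have hff : ∀ w, f (f w) = f w := by
      intro w
      rw [hfz (f w), he1f, sub_zero, hfz, hg]
    set e := e1 + f with he
    have heapp : ∀ w, e w = e1 w + f w := fun w => rfl
    have hfe1 : ∀ w, f (e1 w) = 0 := fun w => by rw [hfz, he1, sub_self, map_zero]
    have hee : ∀ w, e (e w) = e w := by
      intro w
      rw [heapp (e w), heapp w, map_add, map_add, he1, he1f, add_zero,
        hfe1, zero_add, hff]
    refine ⟨e, LinearMap.ext hee, le_antisymm ?_ ?_⟩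
    · rintro _ ⟨w, rfl⟩
      have h1 : e1 w ∈ Submodule.span R (Set.range v) := by
        have : e1 w ∈ LinearMap.range e1 := LinearMap.mem_range_self e1 w
        rw [hre1] at this
        exact Submodule.span_mono (Set.range_comp_subset_range _ _) this
      have hxmem : x ∈ Submodule.span R (Set.range v) :=
        Submodule.subset_span ⟨Fin.last k, rfl⟩
      have he1x : e1 x ∈ Submodule.span R (Set.range v) := by
        have : e1 x ∈ LinearMap.range e1 := LinearMap.mem_range_self e1 x
        rw [hre1] at this
        exact Submodule.span_mono (Set.range_comp_subset_range _ _) this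
      have hymem : y ∈ Submodule.span R (Set.range v) := Submodule.sub_mem _ hxmem he1x
      have h2 : f w ∈ Submodule.span R (Set.range v) := by
        have : f w ∈ LinearMap.range g := ⟨w - e1 w, (hfz w).symm⟩
        rw [hrg] at this
        exact (Submodule.span_singleton_le_iff_mem _ _).mpr hymem this
      rw [heapp]
      exact Submodule.add_mem _ h1 h2
    · rw [Submodule.span_le]
      rintro _ ⟨i, rfl⟩
      refine Fin.lastCases ?_ ?_ i
      · refine ⟨e1 x + y, ?_⟩
        rw [heapp, map_add, hy0, add_zero, he1, hfz, map_add, he1, hy0, add_zero,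
          add_sub_cancel_left, hgy, hy, add_sub_cancel]
      · intro j
        have : v (Fin.castSucc j) ∈ LinearMap.range e1 := by
          rw [hre1]
          exact Submodule.subset_span ⟨j, rfl⟩
        obtain ⟨w, hw⟩ := this
        refine ⟨e1 w, ?_⟩
        rw [heapp, he1, hfz, he1, sub_self, map_zero, add_zero, hw]

private lemma fg_idem {R : Type u} [CommRing R] {ι : Type u} [Fintype ι]
    (hvnr : ∀ x : R, ∃ y : R, x = x * y * x)
    (K : Submodule R (ι → R)) (hK : K.FG) :
    ∃ e : (ι → R) →ₗ[R] (ι → R), e ∘ₗ e = e ∧ LinearMap.range e = K := by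
  obtain ⟨k, v, hv⟩ := Submodule.fg_iff_exists_fin_generating_family.mp hK
  obtain ⟨e, h1, h2⟩ := span_idem hvnr k v
  exact ⟨e, h1, hv ▸ h2⟩

private lemma fp_projective {R : Type u} [CommRing R] (hvnr : ∀ x : R, ∃ y : R, x = x * y * x)
    (M : Type u) [AddCommGroup M] [Module R M] [Module.FinitePresentation R M] :
    Module.Projective R M := by
  obtain ⟨L, _, _, K, eL, hfree, hfin, hKfg⟩ := Module.FinitePresentation.equiv_quotient R M
  let b := Module.Free.chooseBasis R L
  let eF : L ≃ₗ[R] (Module.Free.ChooseBasisIndex R L → R) := b.equivFun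
  set K' : Submodule R (Module.Free.ChooseBasisIndex R L → R) :=
    K.map (eF : L →ₗ[R] _) with hK'
  have hK'fg : K'.FG := hKfg.map _
  obtain ⟨e, hec, hre⟩ := fg_idem hvnr K' hK'fg
  have he : ∀ w, e (e w) = e w := fun w => LinearMap.congr_fun hec w
  have hle : K' ≤ LinearMap.ker (LinearMap.id - e) := by
    intro z hz
    rw [← hre] at hz
    obtain ⟨w, hw⟩ := hz
    simp only [LinearMap.mem_ker, LinearMap.sub_apply, LinearMap.id_apply, ← hw, he, sub_self]
  have hproj : Module.Projective R ((Module.Free.ChooseBasisIndex R L → R) ⧸ K') := by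
    refine Module.Projective.of_split (Submodule.liftQ K' (LinearMap.id - e) hle) K'.mkQ ?_
    apply Submodule.linearMap_qext
    ext w
    simp only [LinearMap.comp_apply, Submodule.mkQ_apply, Submodule.liftQ_apply,
      LinearMap.sub_apply, LinearMap.id_apply, LinearMap.id_comp]
    rw [Submodule.Quotient.eq]
    have hm : e ((LinearMap.single R (fun _ => R) w) 1) ∈ K' :=
      hre ▸ LinearMap.mem_range_self _ _
    simpa using Submodule.neg_mem _ hm
  have equiv : ((Module.Free.ChooseBasisIndex R L → R) ⧸ K') ≃ₗ[R] M :=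
    ((eL.trans (Submodule.Quotient.equiv K K' eF rfl))).symm
  exact Module.Projective.of_equiv equiv

private lemma idem_of_fg {R : Type u} [CommRing R] (hvnr : ∀ x : R, ∃ y : R, x = x * y * x)
    (M : Type u) [AddCommGroup M] [Module R M] [Module.FinitePresentation R M]
    (K : Submodule R M) (hK : K.FG) :
    ∃ e : M →ₗ[R] M, e ∘ₗ e = e ∧ LinearMap.range e = K := by
  haveI : Module.FinitePresentation R (M ⧸ K) :=
    Module.finitePresentation_of_surjective K.mkQ (Submodule.mkQ_surjective K)
      (by rwa [Submodule.ker_mkQ])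
  haveI := fp_projective hvnr (M ⧸ K)
  obtain ⟨s, hs⟩ := Module.projective_lifting_property K.mkQ LinearMap.id
      (Submodule.mkQ_surjective K)
  have hs' : ∀ p, K.mkQ (s p) = p := fun p => LinearMap.congr_fun hs p
  set e := LinearMap.id - s ∘ₗ K.mkQ with he
  have heapp : ∀ z, e z = z - s (K.mkQ z) := fun z => rfl
  have hmk : ∀ z, K.mkQ (e z) = 0 := by
    intro z
    rw [heapp, map_sub, hs', sub_self]
  have hmem : ∀ z, e z ∈ K := by
    intro z
    rw [← Submodule.ker_mkQ K]
    exact hmk z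
  refine ⟨e, ?_, le_antisymm ?_ ?_⟩
  · ext z
    simp only [LinearMap.comp_apply]
    rw [heapp (e z), hmk, map_zero, sub_zero]
  · rintro _ ⟨z, rfl⟩
    exact hmem z
  · intro k hk
    refine ⟨k, ?_⟩
    have : K.mkQ k = 0 := by rwa [← Submodule.ker_mkQ K] at hk
    rw [heapp, this, map_zero, sub_zero]

private lemma fp_submodule {R : Type u} [CommRing R] (hvnr : ∀ x : R, ∃ y : R, x = x * y * x)
    (M : Type u) [AddCommGroup M] [Module R M] [Module.FinitePresentation R M]
    (K : Submodule R M) (hK : K.FG) :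
    Module.FinitePresentation R ↥K := by
  obtain ⟨e, hec, hre⟩ := idem_of_fg hvnr M K hK
  have he : ∀ w, e (e w) = e w := fun w => LinearMap.congr_fun hec w
  have hmem : ∀ z, e z ∈ K := fun z => hre ▸ LinearMap.mem_range_self e z
  set π : M →ₗ[R] ↥K := e.codRestrict K hmem with hπ
  have hsurj : Function.Surjective π := by
    rintro ⟨k, hk⟩
    rw [← hre] at hk
    obtain ⟨w, hw⟩ := hk
    exact ⟨w, Subtype.ext hw⟩
  have hker : LinearMap.ker π = LinearMap.range (LinearMap.id - e) := by
    rw [LinearMap.ker_codRestrict]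
    apply le_antisymm
    · intro z hz
      refine ⟨z, ?_⟩
      simp only [LinearMap.sub_apply, LinearMap.id_apply, LinearMap.mem_ker.mp hz, sub_zero]
    · rintro _ ⟨w, rfl⟩
      simp only [LinearMap.mem_ker, LinearMap.sub_apply, LinearMap.id_apply, map_sub, he,
        sub_self]
  have hfg : (LinearMap.range (LinearMap.id - e)).FG := by
    rw [LinearMap.range_eq_map]
    exact Submodule.FG.map _ (Module.Finite.fg_top (R := R) (M := M))
  exact Module.finitePresentation_of_surjective π hsurj (hker ▸ hfg)

/-- Over a von Neumann regular ring, a full subcategory (an isomorphism-closed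
class) of finitely presented modules is wide (closed under kernels, cokernels
and extensions) if and only if it is Serre (closed under subobjects, quotients
and extensions among finitely presented modules). -/
theorem vonNeumannRegular_wide_iff_serre
    (hvnr : ∀ x : R, ∃ y : R, x = x * y * x)
    (P : (M : Type u) → [AddCommGroup M] → [Module R M] → Prop)
    (hiso : ∀ (M N : Type u) [AddCommGroup M] [Module R M] [AddCommGroup N] [Module R N],
      (M ≃ₗ[R] N) → P M → P N)
    (hfp : ∀ (M : Type u) [AddCommGroup M] [Module R M], P M →
      Module.FinitePresentation R M) :
    IsWideClass R P ↔ IsSerreClass R P := by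
  constructor
  · rintro ⟨hk, hc, he⟩
    refine ⟨?_, ?_, he⟩
    · intro M _ _ hPM K hKfp
      haveI : Module.FinitePresentation R M := hfp M hPM
      haveI : Module.FinitePresentation R ↥K := hKfp
      have hKfg : K.FG := Module.Finite.iff_fg.mp inferInstance
      obtain ⟨e, hec, hre⟩ := idem_of_fg hvnr M K hKfg
      have hee : ∀ w, e (e w) = e w := fun w => LinearMap.congr_fun hec w
      have hker : LinearMap.ker (LinearMap.id - e) = K := by
        apply le_antisymm
        · intro z hz
          have hz' : z - e z = 0 := LinearMap.mem_ker.mp hz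
          have : z = e z := by rwa [sub_eq_zero] at hz'
          rw [this, ← hre]
          exact LinearMap.mem_range_self e z
        · intro k hk
          rw [← hre] at hk
          obtain ⟨w, hw⟩ := hk
          simp only [LinearMap.mem_ker, LinearMap.sub_apply, LinearMap.id_apply, ← hw, hee,
            sub_self]
      have h := hk M M (LinearMap.id - e) hPM hPM
      rwa [hker] at h
    · intro M _ _ hPM K hQfp
      haveI : Module.FinitePresentation R M := hfp M hPM
      haveI : Module.FinitePresentation R (M ⧸ K) := hQfp
      have hKfg : K.FG := by
        have := Module.FinitePresentation.fg_ker K.mkQ (Submodule.mkQ_surjective K)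
        rwa [Submodule.ker_mkQ] at this
      obtain ⟨e, hec, hre⟩ := idem_of_fg hvnr M K hKfg
      have h := hc M M e hPM hPM
      rwa [hre] at h
  · rintro ⟨hs, hq, he⟩
    refine ⟨?_, ?_, he⟩
    · intro M N _ _ _ _ f hPM hPN
      haveI : Module.FinitePresentation R M := hfp M hPM
      haveI : Module.FinitePresentation R N := hfp N hPN
      have hrfg : (LinearMap.range f).FG := by
        rw [LinearMap.range_eq_map]
        exact Submodule.FG.map _ (Module.Finite.fg_top (R := R) (M := M))
      haveI : Module.FinitePresentation R ↥(LinearMap.range f) :=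
        fp_submodule hvnr N (LinearMap.range f) hrfg
      have hkfg : (LinearMap.ker f).FG := by
        have := Module.FinitePresentation.fg_ker f.rangeRestrict
          f.surjective_rangeRestrict
        rwa [LinearMap.ker_rangeRestrict] at this
      exact hs M hPM (LinearMap.ker f) (fp_submodule hvnr M (LinearMap.ker f) hkfg)
    · intro M N _ _ _ _ f hPM hPN
      haveI : Module.FinitePresentation R M := hfp M hPM
      haveI : Module.FinitePresentation R N := hfp N hPN
      have hrfg : (LinearMap.range f).FG := by
        rw [LinearMap.range_eq_map]
        exact Submodule.FG.map _ (Module.Finite.fg_top (R := R) (M := M))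
      refine hq N hPN (LinearMap.range f) ?_
      exact Module.finitePresentation_of_surjective (LinearMap.range f).mkQ
        (Submodule.mkQ_surjective _) (by rwa [Submodule.ker_mkQ])
end

section
/- Every epimorphism of R-modules M → F with F flat is a pure epimorphism; that is, for every finitely presented R-module A, the induced map Hom(A, M) → Hom(A, F) is surjective. -/
universe u

/-- Every epimorphism of `R`-modules `M → F` with `F` flat is a pure
epimorphism: for every finitely presented `R`-module `A`, the induced map
`Hom(A, M) → Hom(A, F)` is surjective. -/
theorem epi_onto_flat_is_pure (R : Type u) [CommRing R]
    (M F : Type u) [AddCommGroup M] [Module R M] [AddCommGroup F] [Module R F]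
    [Module.Flat R F] (g : M →ₗ[R] F) (hg : Function.Surjective g)
    (A : Type u) [AddCommGroup A] [Module R A] [Module.FinitePresentation R A] :
    ∀ h : A →ₗ[R] F, ∃ h' : A →ₗ[R] M, g.comp h' = h := by
  intro h
  -- By the equational criterion of flatness, `h` factors through a finite free module `Fin n →₀ R`,
  -- and maps out of a free module lift along the surjection `g`.
  obtain ⟨n, toFree, ofFree, rfl⟩ := Module.Flat.exists_factorization_of_finitePresentation h
  obtain ⟨lift, hlift⟩ := Module.projective_lifting_property g ofFree hg
  exact ⟨lift ∘ₗ toFree, by rw [← hlift, LinearMap.comp_assoc]⟩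
end

section
/- In a Grothendieck category (or the category of modules over a ring), every object is isomorphic to an inverse limit of injective objects. -/
/-!
Bergman's construction. Embed `M` in an injective `E`, let `d : E → N` be the cokernel map, and let
`j : N^(ℕ) → W` be an injective hull of `N^(ℕ) = ℕ →₀ N`; the shift `eᵢ ↦ eᵢ₊₁` extends to
`σ : W → W`. The tower `⋯ → E × W → E × W` with transition `(x, w) ↦ (x, σ w + j (e₀ • d x))`
consists of injectives. A thread `(x, wₙ)` satisfies `wₙ = σᵐ wₙ₊ₘ + j (d x • (e₀ + ⋯ + eₘ₋₁))`,
and `σᵐ` only reaches the image of sequences vanishing below `m`. So if `r • wₙ = j z ≠ 0`, every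
coordinate of `z` equals `r • d x`, which is impossible for a finitely supported `z ≠ 0`. Hence all
`wₙ = 0`, then `d x = 0`, and the threads are exactly `M`. Essentiality is what rules out the
constant sequence, which would be a thread if `W` were the product `N^ℕ`.
-/

open CategoryTheory CategoryTheory.Limits

universe u v

variable {R : Type u} [Ring R]

instance Module.Injective.prod {A B : Type v} [AddCommGroup A] [Module R A] [AddCommGroup B]
    [Module R B] [Module.Injective R A] [Module.Injective R B] : Module.Injective R (A × B) where
  out _ _ _ _ _ _ f hf g :=
    let ⟨gA, hgA⟩ := Module.Injective.out f hf (LinearMap.fst R A B ∘ₗ g)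
    let ⟨gB, hgB⟩ := Module.Injective.out f hf (LinearMap.snd R A B ∘ₗ g)
    ⟨gA.prod gB, fun x ↦ Prod.ext (hgA x) (hgB x)⟩

theorem Module.Injective.of_retraction {I W : Type v} [AddCommGroup I] [Module R I]
    [AddCommGroup W] [Module R W] [Module.Injective R I] (i : W →ₗ[R] I) (ρ : I →ₗ[R] W)
    (hρ : ∀ w, ρ (i w) = w) : Module.Injective R W where
  out _ _ _ _ _ _ f hf g :=
    let ⟨g', hg'⟩ := Module.Injective.out f hf (i ∘ₗ g)
    ⟨ρ ∘ₗ g', fun x ↦ by rw [LinearMap.comp_apply, hg', LinearMap.comp_apply, hρ]⟩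

theorem Module.exists_injective_embedding [Small.{v} R] (D : Type v) [AddCommGroup D]
    [Module R D] : ∃ (I : Type v) (_ : AddCommGroup I) (_ : Module R I),
      Module.Injective R I ∧ ∃ f : D →ₗ[R] I, Function.Injective f := by
  let I := CategoryTheory.Injective.under (ModuleCat.of R D)
  have : CategoryTheory.Injective (ModuleCat.of R I) := inferInstanceAs (CategoryTheory.Injective I)
  exact ⟨I, _, _, Module.injective_module_of_injective_object R I,
    (CategoryTheory.Injective.ι (ModuleCat.of R D)).hom,
    (ModuleCat.mono_iff_injective _).1 inferInstance⟩

def Submodule.IsEssential {M : Type*} [AddCommGroup M] [Module R M] (N : Submodule R M) : Prop :=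
  ∀ ⦃x : M⦄, x ≠ 0 → ∃ r : R, r • x ≠ 0 ∧ r • x ∈ N

namespace Submodule

variable {M : Type*} [AddCommGroup M] [Module R M]

theorem exists_le_maximal_forall_mem (P : M → Prop) {N₀ : Submodule R M}
    (h₀ : ∀ x ∈ N₀, P x) : ∃ N, N₀ ≤ N ∧ Maximal (fun N : Submodule R M ↦ ∀ x ∈ N, P x) N := by
  refine zorn_le_nonempty₀ {N | ∀ x ∈ N, P x} (fun c hc hchain y hy ↦
    ⟨sSup c, fun x hx ↦ ?_, fun _ ↦ le_sSup⟩) N₀ h₀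
  obtain ⟨N, hN, hxN⟩ := (mem_sSup_of_directed ⟨y, hy⟩ hchain.directedOn).1 hx
  exact hc hN x hxN

theorem IsEssential.injective {M' : Type*} [AddCommGroup M'] [Module R M'] {N : Submodule R M}
    (hN : N.IsEssential) {g : M →ₗ[R] M'} (hg : ∀ x ∈ N, g x = 0 → x = 0) :
    Function.Injective g := by
  refine (injective_iff_map_eq_zero g).2 fun x hx ↦ by_contra fun hx0 ↦ ?_
  obtain ⟨r, hr0, hrN⟩ := hN hx0
  exact hr0 (hg _ hrN (by rw [map_smul, hx, smul_zero]))

theorem isEssential_map_mkQ {W C : Submodule R M}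
    (hC : Maximal (fun C : Submodule R M ↦ ∀ x ∈ C, x ∈ W → x = 0) C) :
    (W.map C.mkQ).IsEssential := by
  intro xb hxb
  obtain ⟨x, rfl⟩ := C.mkQ_surjective xb
  have hxC : x ∉ C := fun hx ↦ hxb ((Quotient.mk_eq_zero C).2 hx)
  obtain ⟨z, hz, hzW, hz0⟩ : ∃ z ∈ C ⊔ span R {x}, z ∈ W ∧ z ≠ 0 := by
    by_contra! h
    exact hxC (hC.2 h le_sup_left (mem_sup_right (mem_span_singleton_self x)))
  obtain ⟨c, hc, y, hy, rfl⟩ := mem_sup.1 hz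
  obtain ⟨r, rfl⟩ := mem_span_singleton.1 hy
  have hmkQ : r • C.mkQ x = C.mkQ (c + r • x) := by
    rw [map_add, map_smul, (C.mkQ_apply c).trans ((Quotient.mk_eq_zero C).2 hc), zero_add]
  refine ⟨r, ?_, hmkQ ▸ mem_map_of_mem hzW⟩
  rw [hmkQ, mkQ_apply, Ne, Quotient.mk_eq_zero]
  exact fun hzC ↦ hz0 (hC.1 _ hzC hzW)

/-- With `C` a complement of `W`, the inverse of `W ≅ W.map C.mkQ` extends to an embedding
`g : I ⧸ C → I`, whose range is again essential over `A`; maximality makes `x ↦ g (C.mkQ x)` a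
retraction of `I` onto `W`. -/
theorem injective_of_maximal_essential {I : Type v} [AddCommGroup I] [Module R I]
    [Module.Injective R I] {A W : Submodule R I}
    (hW : Maximal (fun B : Submodule R I ↦ ∀ x ∈ B, x ≠ 0 → ∃ r : R, r • x ≠ 0 ∧ r • x ∈ A) W) :
    Module.Injective R W := by
  obtain ⟨C, -, hC⟩ := exists_le_maximal_forall_mem (fun x ↦ x ∈ W → x = 0) (N₀ := ⊥)
    fun _ hx _ ↦ (mem_bot R).1 hx
  let φ : W →ₗ[R] I ⧸ C := C.mkQ ∘ₗ W.subtype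
  have hφ : Function.Injective φ := (injective_iff_map_eq_zero φ).2 fun w hw ↦
    Subtype.ext (hC.1 _ ((Quotient.mk_eq_zero C).1 hw) w.2)
  obtain ⟨g, hg⟩ := Module.Injective.out φ hφ W.subtype
  have hess := isEssential_map_mkQ hC
  have hg_inj : Function.Injective g := hess.injective <| by
    rintro _ ⟨w, hw, rfl⟩ hgw
    rw [show (w : I) = 0 from (hg ⟨w, hw⟩).symm.trans hgw, map_zero]
  have hgW : LinearMap.range g ≤ W := by
    refine hW.2 ?_ fun w hw ↦ ⟨φ ⟨w, hw⟩, hg ⟨w, hw⟩⟩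
    rintro _ ⟨y, rfl⟩ hz
    have hy : y ≠ 0 := by rintro rfl; exact hz (map_zero g)
    obtain ⟨r, hr0, w, hw, hrw⟩ := hess hy
    have hgw : g (r • y) = w := by rw [← hrw]; exact hg ⟨w, hw⟩
    obtain ⟨r', hr'0, hr'A⟩ := hW.1 w hw (hgw ▸ (map_ne_zero_iff g hg_inj).2 hr0)
    refine ⟨r' * r, ?_, ?_⟩ <;> rwa [mul_smul, ← map_smul, hgw]
  exact Module.Injective.of_retraction W.subtype
    ((g ∘ₗ C.mkQ).codRestrict W fun x ↦ hgW ⟨_, rfl⟩) fun w ↦ Subtype.ext (hg w)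

end Submodule

theorem Module.exists_injective_essential_extension [Small.{v} R] (D : Type v) [AddCommGroup D]
    [Module R D] : ∃ (W : Type v) (_ : AddCommGroup W) (_ : Module R W), Module.Injective R W ∧
      ∃ j : D →ₗ[R] W, Function.Injective j ∧ (LinearMap.range j).IsEssential := by
  obtain ⟨I, _, _, _, f, hf⟩ := Module.exists_injective_embedding (R := R) D
  obtain ⟨W, hAW, hW⟩ := Submodule.exists_le_maximal_forall_mem
    (fun x ↦ x ≠ 0 → ∃ r : R, r • x ≠ 0 ∧ r • x ∈ LinearMap.range f) (N₀ := LinearMap.range f)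
    fun _ hx _ ↦ ⟨1, by rwa [one_smul], by rwa [one_smul]⟩
  refine ⟨W, _, _, Submodule.injective_of_maximal_essential hW,
    f.codRestrict W fun d ↦ hAW ⟨d, rfl⟩, fun d d' h ↦ hf (congrArg Subtype.val h), ?_⟩
  intro w hw
  obtain ⟨r, hr0, d, hd⟩ := hW.1 w w.2 (by simpa using hw)
  exact ⟨r, fun h ↦ hr0 (by rw [← W.coe_smul, h, W.coe_zero]), d, Subtype.ext hd⟩

namespace Finsupp

variable (R) (N : Type*) [AddCommGroup N] [Module R N]

noncomputable def succShift : (ℕ →₀ N) →ₗ[R] ℕ →₀ N := lmapDomain N R Nat.succ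

variable {R N}

@[simp]
theorem succShift_apply_zero (y : ℕ →₀ N) : succShift R N y 0 = 0 :=
  mapDomain_of_notMem_range _ _ fun ⟨_, h⟩ ↦ Nat.succ_ne_zero _ h

@[simp]
theorem succShift_apply_succ (y : ℕ →₀ N) (i : ℕ) : succShift R N y (i + 1) = y i :=
  mapDomain_apply Nat.succ_injective y i

theorem succShift_injective : Function.Injective (succShift R N) :=
  mapDomain_injective Nat.succ_injective

theorem succShift_single (i : ℕ) (c : N) : succShift R N (single i c) = single (i + 1) c :=
  mapDomain_single

theorem exists_eq_single_zero_add_succShift (y : ℕ →₀ N) :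
    ∃ y', y = single 0 (y 0) + succShift R N y' := by
  induction y using Finsupp.induction_linear with
  | zero => exact ⟨0, by simp⟩
  | add y z hy hz =>
    obtain ⟨y', hy'⟩ := hy
    obtain ⟨z', hz'⟩ := hz
    exact ⟨y' + z', by rw [map_add, add_apply, single_add, add_add_add_comm, ← hy', ← hz']⟩
  | single i c =>
    cases i with
    | zero => exact ⟨0, by simp⟩
    | succ i => exact ⟨single i c, by simp [succShift_single]⟩

end Finsupp

open Finsupp

structure IsEssentialShiftExtension {N W : Type*} [AddCommGroup N] [Module R N]
    [AddCommGroup W] [Module R W] (j : (ℕ →₀ N) →ₗ[R] W) (σ : W →ₗ[R] W) : Prop where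
  injective : Function.Injective j
  isEssential : (LinearMap.range j).IsEssential
  extends_shift : ∀ y, σ (j y) = j (succShift R N y)

namespace IsEssentialShiftExtension

variable {N W : Type*} [AddCommGroup N] [Module R N] [AddCommGroup W] [Module R W]
  {j : (ℕ →₀ N) →ₗ[R] W} {σ : W →ₗ[R] W}

theorem eq_zero_of_apply_eq_single_zero (h : IsEssentialShiftExtension j σ) {w : W} {c : N}
    (hw : σ w = j (single 0 c)) : w = 0 := by
  by_contra hw0
  obtain ⟨r, hr0, y, hy⟩ := h.isEssential hw0
  have hshift : succShift R N y = single 0 (r • c) := h.injective <| by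
    rw [← h.extends_shift, hy, map_smul, hw, ← map_smul, smul_single]
  have hrc : r • c = 0 := by simpa using (congrArg (· 0) hshift).symm
  rw [hrc, single_zero, ← (succShift R N).map_zero] at hshift
  rw [← hy, succShift_injective hshift, map_zero] at hr0
  exact hr0 rfl

theorem extension_injective (h : IsEssentialShiftExtension j σ) : Function.Injective σ :=
  (injective_iff_map_eq_zero σ).2 fun _ hw ↦
    h.eq_zero_of_apply_eq_single_zero (c := 0) (by simp [hw])

theorem apply_zero_eq_zero_of_mem_range (h : IsEssentialShiftExtension j σ) {y : ℕ →₀ N}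
    (hy : j y ∈ LinearMap.range σ) : y 0 = 0 := by
  obtain ⟨w, hw⟩ := hy
  obtain ⟨y', hy'⟩ := exists_eq_single_zero_add_succShift (R := R) y
  have : σ (w - j y') = j (single 0 (y 0)) := by
    rw [map_sub, hw, h.extends_shift, ← map_sub, hy', add_sub_cancel_right, ← hy']
  rw [h.eq_zero_of_apply_eq_single_zero this, map_zero, eq_comm, map_eq_zero_iff j h.injective,
    single_eq_zero] at this
  exact this

theorem apply_eq_zero_of_mem_range_pow (h : IsEssentialShiftExtension j σ) {m : ℕ} {y : ℕ →₀ N}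
    (hy : j y ∈ LinearMap.range (σ ^ m)) {i : ℕ} (hi : i < m) : y i = 0 := by
  induction m generalizing y i with
  | zero => omega
  | succ m ih =>
    obtain ⟨w, hw⟩ := hy
    rw [pow_succ', Module.End.mul_apply] at hw
    have hy0 : y 0 = 0 := h.apply_zero_eq_zero_of_mem_range ⟨_, hw⟩
    obtain ⟨y', hy'⟩ := exists_eq_single_zero_add_succShift (R := R) y
    rw [hy0, single_zero, zero_add] at hy'
    subst hy'
    have hjy' : j y' = (σ ^ m) w := h.extension_injective (by rw [h.extends_shift, hw])
    cases i with
    | zero => exact succShift_apply_zero y'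
    | succ i => rw [succShift_apply_succ]; exact ih ⟨w, hjy'.symm⟩ (by omega)

theorem pow_apply_add_apply_sum (h : IsEssentialShiftExtension j σ) {w : ℕ → W} {c : N}
    (hw : ∀ n, σ (w (n + 1)) + j (single 0 c) = w n) (m n : ℕ) :
    (σ ^ m) (w (n + m)) + j (∑ i ∈ Finset.range m, single i c) = w n := by
  induction m generalizing n with
  | zero => simp
  | succ m ih =>
    have hsum : ∑ i ∈ Finset.range (m + 1), single i c
        = succShift R N (∑ i ∈ Finset.range m, single i c) + single 0 c := by
      simp only [Finset.sum_range_succ', map_sum, succShift_single]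
    rw [hsum, map_add, ← h.extends_shift, pow_succ', Module.End.mul_apply, ← add_assoc, ← map_add,
      show n + (m + 1) = n + 1 + m by omega, ih, hw]

theorem eq_zero_of_forall_apply_add_eq (h : IsEssentialShiftExtension j σ) {w : ℕ → W} {c : N}
    (hw : ∀ n, σ (w (n + 1)) + j (single 0 c) = w n) : c = 0 ∧ ∀ n, w n = 0 := by
  have hw_zero : ∀ n, w n = 0 := by
    intro n
    by_contra hn
    obtain ⟨r, hr0, z, hz⟩ := h.isEssential hn
    have hz_apply : ∀ i, z i = r • c := fun i ↦ by
      have hmem : j (z - r • ∑ k ∈ Finset.range (i + 1), single k c)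
          ∈ LinearMap.range (σ ^ (i + 1)) := by
        refine ⟨r • w (n + (i + 1)), ?_⟩
        rw [map_smul, map_sub, hz, map_smul, ← h.pow_apply_add_apply_sum hw (i + 1) n,
          ← smul_sub, add_sub_cancel_right]
      have := h.apply_eq_zero_of_mem_range_pow hmem (Nat.lt_succ_self i)
      simpa [Finsupp.finsetSum_apply, single_apply, sub_eq_zero] using this
    obtain ⟨i, hi⟩ := Infinite.exists_notMem_finset z.support
    have hrc : r • c = 0 := by rw [← hz_apply i]; exact notMem_support_iff.mp hi
    have hz0 : z = 0 := ext fun i ↦ (hz_apply i).trans hrc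
    exact hr0 (by rw [← hz, hz0, map_zero])
  refine ⟨?_, hw_zero⟩
  have := hw 0
  rwa [hw_zero, hw_zero, map_zero, zero_add, map_eq_zero_iff _ h.injective, single_eq_zero] at this

end IsEssentialShiftExtension

section Tower

variable {A M : Type v} [AddCommGroup A] [Module R A]
  [AddCommGroup M] [Module R M] (t : A →ₗ[R] A) (ℓ : M →ₗ[R] A)

noncomputable def towerOfEnd : ℕᵒᵖ ⥤ ModuleCat.{v} R :=
  Functor.ofOpSequence (X := fun _ ↦ ModuleCat.of R A) fun _ ↦ ModuleCat.ofHom t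

theorem towerOfEnd_map_succ (n : ℕ) :
    (towerOfEnd t).map (homOfLE (Nat.le_add_right n 1)).op = ModuleCat.ofHom t :=
  Functor.ofOpSequence_map_homOfLE_succ _ n

noncomputable def towerCone (hℓ : t ∘ₗ ℓ = ℓ) : Cone (towerOfEnd t) where
  pt := ModuleCat.of R M
  π := NatTrans.ofOpSequence (fun _ ↦ ModuleCat.ofHom ℓ) fun n ↦ by
    rw [towerOfEnd_map_succ]
    ext x
    exact (LinearMap.congr_fun hℓ x).symm

theorem nonempty_isLimit_towerCone (hℓ : t ∘ₗ ℓ = ℓ) (hinj : Function.Injective ℓ)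
    (hthreads : ∀ x : ℕ → A, (∀ n, t (x (n + 1)) = x n) → ∃ m, ∀ n, x n = ℓ m) :
    Nonempty (IsLimit (towerCone t ℓ hℓ)) := by
  refine ⟨isLimitOfReflects (forget _) ?_⟩
  refine ((Types.isLimit_iff _).2 fun s hs ↦ ?_).some
  obtain ⟨m, hm⟩ := hthreads (fun n ↦ s ⟨n⟩) fun n ↦ by
    have := hs (homOfLE (Nat.le_add_right n 1)).op
    simp only [Functor.comp_map, towerOfEnd_map_succ] at this
    exact this
  refine ⟨m, fun n ↦ (hm n.unop).symm, fun m' hm' ↦ hinj ?_⟩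
  rw [← hm 0]
  exact hm' ⟨0⟩

end Tower

section Bergman

variable {M E N W : Type*} [AddCommGroup M] [Module R M] [AddCommGroup E] [Module R E]
  [AddCommGroup N] [Module R N] [AddCommGroup W] [Module R W]
  {ι : M →ₗ[R] E} {d : E →ₗ[R] N} (j : (ℕ →₀ N) →ₗ[R] W) (σ : W →ₗ[R] W)

noncomputable def bergmanTransition (d : E →ₗ[R] N) : E × W →ₗ[R] E × W :=
  (LinearMap.fst R E W).prod
    (σ ∘ₗ LinearMap.snd R E W + j ∘ₗ Finsupp.lsingle 0 ∘ₗ d ∘ₗ LinearMap.fst R E W)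

theorem bergmanTransition_apply (p : E × W) :
    bergmanTransition j σ d p = (p.1, σ p.2 + j (Finsupp.single 0 (d p.1))) := rfl

theorem bergmanTransition_comp_inl (hd : Function.Exact ι d) :
    bergmanTransition j σ d ∘ₗ LinearMap.inl R E W ∘ₗ ι = LinearMap.inl R E W ∘ₗ ι := by
  ext m <;> simp [bergmanTransition_apply, hd.apply_apply_eq_zero]

theorem exists_eq_inl_of_bergmanTransition {j σ} (h : IsEssentialShiftExtension j σ)
    (hd : Function.Exact ι d) (x : ℕ → E × W)
    (hx : ∀ n, bergmanTransition j σ d (x (n + 1)) = x n) :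
    ∃ m, ∀ n, x n = (LinearMap.inl R E W ∘ₗ ι) m := by
  have hfst : ∀ n, (x n).1 = (x 0).1 := fun n ↦ by
    induction n with
    | zero => rfl
    | succ n ih => rw [← ih, ← hx n, bergmanTransition_apply]
  obtain ⟨hdx, hsnd⟩ := h.eq_zero_of_forall_apply_add_eq (w := fun n ↦ (x n).2)
    (c := d (x 0).1) fun n ↦ by rw [← hfst (n + 1), ← hx n, bergmanTransition_apply]
  obtain ⟨m, hm⟩ := (hd (x 0).1).1 hdx
  exact ⟨m, fun n ↦ Prod.ext (by simp [hfst n, hm]) (by simp [hsnd n])⟩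

end Bergman

/-- Bergman's theorem: in the category of modules over a ring, every object is
isomorphic to an inverse (cofiltered) limit of injective objects. -/
theorem module_is_inverse_limit_of_injectives (R : Type u) [Ring R]
    (M : Type u) [AddCommGroup M] [Module R M] :
    ∃ (J : Type u) (_ : SmallCategory J) (_ : IsCofiltered J)
      (F : J ⥤ ModuleCat.{u} R) (_ : ∀ j : J, Injective (F.obj j)),
      Nonempty (ModuleCat.of R M ≅ limit F) := by
  obtain ⟨E, _, _, _, ι, hι⟩ := Module.exists_injective_embedding (R := R) M
  obtain ⟨W, _, _, _, j, hj, hess⟩ :=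
    Module.exists_injective_essential_extension (R := R) (ℕ →₀ E ⧸ LinearMap.range ι)
  obtain ⟨σ, hσ⟩ := Module.Injective.out j hj (j ∘ₗ Finsupp.succShift R _)
  have hd := LinearMap.exact_map_mkQ_range ι
  let t := bergmanTransition j σ (LinearMap.range ι).mkQ
  obtain ⟨hlim⟩ := nonempty_isLimit_towerCone t _ (bergmanTransition_comp_inl j σ hd)
    (LinearMap.inl_injective.comp hι)
    (exists_eq_inl_of_bergmanTransition ⟨hj, hess, hσ⟩ hd)
  let e : AsSmall.{u} ℕᵒᵖ ≌ ℕᵒᵖ := AsSmall.equiv.symm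
  exact ⟨AsSmall.{u} ℕᵒᵖ, inferInstance, inferInstance, e.functor ⋙ towerOfEnd t,
    fun _ ↦ Module.injective_object_of_injective_module R (E × W),
    ⟨(hlim.whiskerEquivalence e).conePointUniqueUpToIso (limit.isLimit _)⟩⟩
end

section
/- For a commutative ring A, the ring T(A) = A[x_a : a ∈ A]/(x_a²a − x_a, x_a a² − a : a ∈ A) is von Neumann regular, and the canonical map A → T(A) is an epimorphism of commutative rings. -/
/-!
Each generator `x_a` is a quasi-inverse of `a`: `x_a² a = x_a` and `x_a a² = a`. Quasi-inverses
are unique in a commutative ring, so ring maps out of `T(A)` are determined on `A`.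

For regularity, adjoin the `x_a` one at a time. If every element of `S` is regular and `y` has a
quasi-inverse `c ∈ S`, then `e = c y` is idempotent and splits `S[y]` in two: on `1 - e` we have
`y = 0`, so `S[y](1 - e) = S(1 - e)`; on `e` the element `y` inverts `c`, so each `t e` becomes
`r e` with `r ∈ S` after multiplication by a power of `c`. Both halves are then regular, hence so
is `t = t e + t (1 - e)`.
-/

universe u

open MvPolynomial

def IsVonNeumannRegular {R : Type*} [Mul R] (t : R) : Prop := ∃ s, t = t * s * t

namespace IsVonNeumannRegular

section CommMonoid

variable {M : Type*} [CommMonoid M]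

theorem mul {t t' : M} (h : IsVonNeumannRegular t) (h' : IsVonNeumannRegular t') :
    IsVonNeumannRegular (t * t') := by
  obtain ⟨s, hs⟩ := h
  obtain ⟨s', hs'⟩ := h'
  refine ⟨s * s', ?_⟩
  conv_lhs => rw [hs, hs']
  ac_rfl

theorem pow {t : M} (h : IsVonNeumannRegular t) (n : ℕ) : IsVonNeumannRegular (t ^ n) := by
  induction n with
  | zero => exact ⟨1, by simp⟩
  | succ n ih => rw [pow_succ]; exact ih.mul h

theorem of_isIdempotentElem {e : M} (he : IsIdempotentElem e) : IsVonNeumannRegular e :=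
  ⟨1, by rw [mul_one, he.eq]⟩

theorem of_sq_mul_eq {y c : M} (h : y ^ 2 * c = y) : IsVonNeumannRegular y :=
  ⟨c, by rw [← mul_rotate, ← sq, h]⟩

theorem of_mul_sq_eq {y c : M} (h : y * c ^ 2 = c) : IsVonNeumannRegular c :=
  ⟨y, by rw [mul_comm c y, mul_assoc, ← sq, h]⟩

end CommMonoid

variable {T : Type*} [CommRing T]

theorem of_mul_of_mul_one_sub {t e : T} (he : IsIdempotentElem e)
    (h₁ : IsVonNeumannRegular (t * e)) (h₂ : IsVonNeumannRegular (t * (1 - e))) :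
    IsVonNeumannRegular t := by
  obtain ⟨s₁, hs₁⟩ := h₁
  obtain ⟨s₂, hs₂⟩ := h₂
  refine ⟨e * s₁ + (1 - e) * s₂, ?_⟩
  linear_combination hs₁ + hs₂ + t ^ 2 * (s₁ + s₂) * he.eq

end IsVonNeumannRegular

section CommMonoid

variable {M : Type*} [CommMonoid M]

theorem eq_of_quasiInverse {c y z : M} (hy : y ^ 2 * c = y) (hc : y * c ^ 2 = c)
    (hz : z ^ 2 * c = z) (hc' : z * c ^ 2 = c) : y = z := by
  have key {y z : M} (hy : y ^ 2 * c = y) (hc' : z * c ^ 2 = c) : y = y * c * z :=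
    calc y = y ^ 2 * (z * c ^ 2) := by rw [hc', hy]
      _ = y ^ 2 * c * (c * z) := by simp only [sq]; ac_rfl
      _ = y * c * z := by rw [hy, mul_assoc]
  calc y = y * c * z := key hy hc'
    _ = z * c * y := by ac_rfl
    _ = z := (key hz hc).symm

theorem isIdempotentElem_mul_of_mul_sq_eq {y c : M} (hc : y * c ^ 2 = c) :
    IsIdempotentElem (c * y) :=
  calc c * y * (c * y) = y * c ^ 2 * y := by simp only [sq]; ac_rfl
    _ = c * y := by rw [hc]

end CommMonoid

section Adjoin

variable {R T : Type*} [CommRing R] [CommRing T] [Algebra R T]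

theorem exists_mul_eq_of_mem_adjoin_insert {S : Subalgebra R T} {y c : T} (hcS : c ∈ S)
    (hy : y ^ 2 * c = y) (hc : y * c ^ 2 = c) {t : T}
    (ht : t ∈ Algebra.adjoin R (insert y (S : Set T))) :
    (∃ r ∈ S, t * (1 - c * y) = r * (1 - c * y)) ∧
      ∃ n, ∃ q ∈ S, t * (c * y) * c ^ n = q * (c * y) := by
  have he := isIdempotentElem_mul_of_mul_sq_eq hc
  induction ht using Algebra.adjoin_induction with
  | mem x hx =>
    rcases hx with rfl | hx
    · exact ⟨⟨0, zero_mem _, by linear_combination -hy⟩, 1, 1, one_mem _, by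
        linear_combination x * hc⟩
    · exact ⟨⟨x, hx, rfl⟩, 0, x, hx, by ring⟩
  | algebraMap a =>
    exact ⟨⟨_, S.algebraMap_mem a, rfl⟩, 0, _, S.algebraMap_mem a, by ring⟩
  | add x x' _ _ hx hx' =>
    obtain ⟨⟨r, hr, hr'⟩, n, q, hq, hq'⟩ := hx
    obtain ⟨⟨r', hr₂, hr₂'⟩, n', q', hq₂, hq₂'⟩ := hx'
    refine ⟨⟨r + r', add_mem hr hr₂, by linear_combination hr' + hr₂'⟩, n + n',
      q * c ^ n' + q' * c ^ n,
      add_mem (mul_mem hq (pow_mem hcS _)) (mul_mem hq₂ (pow_mem hcS _)), ?_⟩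
    linear_combination c ^ n' * hq' + c ^ n * hq₂'
  | mul x x' _ _ hx hx' =>
    obtain ⟨⟨r, hr, hr'⟩, n, q, hq, hq'⟩ := hx
    obtain ⟨⟨r', hr₂, hr₂'⟩, n', q', hq₂, hq₂'⟩ := hx'
    refine ⟨⟨r * r', mul_mem hr hr₂, ?_⟩, n + n', q * q', mul_mem hq hq₂, ?_⟩
    · linear_combination (x' * (1 - c * y)) * hr' + (r * (1 - c * y)) * hr₂'
        + (r * r' - x * x') * he.one_sub.eq
    · linear_combination (x' * (c * y) * c ^ n') * hq' + (q * (c * y)) * hq₂'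
        + (q * q' - x * x' * c ^ (n + n')) * he.eq

theorem forall_mem_adjoin_insert_isVonNeumannRegular {S : Subalgebra R T}
    (hS : ∀ t ∈ S, IsVonNeumannRegular t) {y c : T} (hcS : c ∈ S)
    (hy : y ^ 2 * c = y) (hc : y * c ^ 2 = c) :
    ∀ t ∈ Algebra.adjoin R (insert y (S : Set T)), IsVonNeumannRegular t := by
  have he := isIdempotentElem_mul_of_mul_sq_eq hc
  have he_pow (n : ℕ) : c * y * c ^ n * y ^ n = c * y := by
    induction n with
    | zero => ring
    | succ n ih => linear_combination c ^ n * y ^ n * he.eq + ih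
  intro t ht
  obtain ⟨⟨r, hr, hr'⟩, n, q, hq, hq'⟩ := exists_mul_eq_of_mem_adjoin_insert hcS hy hc ht
  refine .of_mul_of_mul_one_sub he ?_ ?_
  · have : t * (c * y) = q * (c * y) * y ^ n := by
      linear_combination (-t) * he_pow n + y ^ n * hq'
    rw [this]
    exact ((hS q hq).mul (.of_isIdempotentElem he)).mul
      ((IsVonNeumannRegular.of_sq_mul_eq hy).pow n)
  · rw [hr']
    exact (hS r hr).mul (.of_isIdempotentElem he.one_sub)

theorem forall_mem_adjoin_isVonNeumannRegular_of_finite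
    (hR : ∀ a : R, IsVonNeumannRegular (algebraMap R T a)) {s : Set T} (hs : s.Finite)
    (hq : ∀ y ∈ s, ∃ a : R,
      y ^ 2 * algebraMap R T a = y ∧ y * algebraMap R T a ^ 2 = algebraMap R T a) :
    ∀ t ∈ Algebra.adjoin R s, IsVonNeumannRegular t := by
  induction s, hs using Set.Finite.induction_on with
  | empty =>
    intro t ht
    rw [Algebra.adjoin_empty, Algebra.mem_bot] at ht
    obtain ⟨a, rfl⟩ := ht
    exact hR a
  | @insert y s _ _ ih =>
    obtain ⟨a, hy, hc⟩ := hq y (Set.mem_insert y s)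
    rw [← Algebra.adjoin_insert_adjoin]
    exact forall_mem_adjoin_insert_isVonNeumannRegular
      (ih fun z hz ↦ hq z (Set.mem_insert_of_mem y hz)) (Subalgebra.algebraMap_mem _ a) hy hc

end Adjoin

noncomputable def olivierIdeal (A : Type u) [CommRing A] : Ideal (MvPolynomial A A) :=
  Ideal.span {p | ∃ a : A, p = X a ^ 2 * C a - X a ∨ p = X a * C (a ^ 2) - C a}

abbrev OlivierRing (A : Type u) [CommRing A] := MvPolynomial A A ⧸ olivierIdeal A

namespace OlivierRing

variable {A : Type u} [CommRing A]

noncomputable def x (a : A) : OlivierRing A := Ideal.Quotient.mk _ (X a)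

theorem x_sq_mul (a : A) : x a ^ 2 * algebraMap A (OlivierRing A) a = x a :=
  Ideal.Quotient.eq.2 (Ideal.subset_span ⟨a, .inl rfl⟩)

theorem x_mul_sq (a : A) :
    x a * algebraMap A (OlivierRing A) a ^ 2 = algebraMap A (OlivierRing A) a :=
  Ideal.Quotient.eq.2 (Ideal.subset_span ⟨a, .inr (by rw [map_pow]; rfl)⟩)

theorem isVonNeumannRegular (t : OlivierRing A) : IsVonNeumannRegular t := by
  obtain ⟨p, rfl⟩ := Ideal.Quotient.mkₐ_surjective A (olivierIdeal A) t
  have hp : Ideal.Quotient.mkₐ A (olivierIdeal A) p ∈ Algebra.adjoin A (x '' p.vars) := by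
    have : Ideal.Quotient.mkₐ A (olivierIdeal A) p ∈
        (supported A (p.vars : Set A)).map (Ideal.Quotient.mkₐ A (olivierIdeal A)) :=
      Subalgebra.mem_map.2 ⟨p, mem_supported_vars p, rfl⟩
    rwa [supported_eq_adjoin_X, AlgHom.map_adjoin, Set.image_image] at this
  refine forall_mem_adjoin_isVonNeumannRegular_of_finite (fun a ↦ .of_mul_sq_eq (x_mul_sq a))
    (p.vars.finite_toSet.image x) ?_ _ hp
  rintro _ ⟨a, -, rfl⟩
  exact ⟨a, x_sq_mul a, x_mul_sq a⟩

theorem ringHom_ext {T : Type*} [CommRing T] {g h : OlivierRing A →+* T}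
    (hgh : g.comp (algebraMap A (OlivierRing A)) = h.comp (algebraMap A (OlivierRing A))) :
    g = h := by
  have hA (a : A) : g (algebraMap A _ a) = h (algebraMap A _ a) := RingHom.congr_fun hgh a
  refine Ideal.Quotient.ringHom_ext (MvPolynomial.ringHom_ext hA fun a ↦ ?_)
  show g (x a) = h (x a)
  refine eq_of_quasiInverse (c := g (algebraMap A _ a)) ?_ ?_ ?_ ?_
  · rw [← map_pow, ← map_mul, x_sq_mul]
  · rw [← map_pow, ← map_mul, x_mul_sq]
  · rw [hA, ← map_pow, ← map_mul, x_sq_mul]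
  · rw [hA, ← map_pow, ← map_mul, x_mul_sq]

end OlivierRing

/-- Olivier's construction: for a commutative ring `A`, the ring
`T(A) = A[x_a : a ∈ A] / (x_a² a − x_a, x_a a² − a : a ∈ A)` is von Neumann
regular and the canonical map `A → T(A)` is an epimorphism of commutative
rings. -/
theorem olivier_vonNeumannRegular_epi (A : Type u) [CommRing A] :
    letI I : Ideal (MvPolynomial A A) :=
      Ideal.span {p : MvPolynomial A A | ∃ a : A,
        p = X a ^ 2 * C a - X a ∨ p = X a * C (a ^ 2) - C a}
    (∀ t : MvPolynomial A A ⧸ I, ∃ s, t = t * s * t) ∧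
      (∀ (T : Type u) [CommRing T] (g h : (MvPolynomial A A ⧸ I) →+* T),
        g.comp ((Ideal.Quotient.mk I).comp (C : A →+* MvPolynomial A A)) =
          h.comp ((Ideal.Quotient.mk I).comp (C : A →+* MvPolynomial A A)) → g = h) :=
  ⟨OlivierRing.isVonNeumannRegular, fun _ _ _ _ ↦ OlivierRing.ringHom_ext⟩
end
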